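/- arXiv:1412.7330 — 7 statements merged into one kernel-verified Lean document; each statement's English description precedes it below -/
import Mathlib

section
/- Every power automorphism of an abelian p-group A is universal: there exists a p-adic integer unit t such that φ(a) = a^t for all a ∈ A (equivalently, for each k, φ acts on elements of order dividing p^k as raising to a fixed power t_k with t_k ≡ t_{k+1} mod p^k). -/
private lemma zpow_sub_div {A : Type*} [CommGroup A] (x : A) (m n : ℤ) :
    x ^ (m - n) = x ^ m / x ^ n := by
  rw [zpow_sub, div_eq_mul_inv]

/-- Decomposition lemma: if `a` has maximal order `p ^ k` among elements of
`Ω_k = {b | b ^ p ^ k = 1}`, then every `b ∈ Ω_k` can be written as `a ^ α * c ^ β`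
where `⟨c⟩ ∩ ⟨a⟩` is trivial. -/
private lemma aux_decomp {A : Type*} [CommGroup A] {p k : ℕ} (hp : p.Prime)
    {a : A} (ha : orderOf a = p ^ k) :
    ∀ n : ℕ, ∀ b : A, orderOf b ≤ n → b ^ p ^ k = 1 →
      ∃ (c : A) (α β : ℤ), b = a ^ α * c ^ β ∧ c ^ p ^ k = 1 ∧
        ∀ s : ℤ, (∃ u : ℤ, c ^ s = a ^ u) → c ^ s = 1 := by
  intro n
  induction n with
  | zero =>
    intro b hb hbk
    exfalso
    have h1 : orderOf b ∣ p ^ k := orderOf_dvd_of_pow_eq_one hbk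
    have h2 : orderOf b = 0 := Nat.le_zero.mp hb
    rw [h2] at h1
    exact (pow_ne_zero k hp.pos.ne') (Nat.eq_zero_of_zero_dvd h1)
  | succ n IH =>
    intro b hb hbk
    by_cases htriv : ∀ s : ℤ, (∃ u : ℤ, b ^ s = a ^ u) → b ^ s = 1
    · exact ⟨b, 0, 1, by simp, hbk, htriv⟩
    push_neg at htriv
    obtain ⟨s, ⟨u, hu⟩, hs1⟩ := htriv
    obtain ⟨j, hjk, hj⟩ := (Nat.dvd_prime_pow hp).1 (orderOf_dvd_of_pow_eq_one hbk)
    have hb1 : b ≠ 1 := by rintro rfl; exact hs1 (one_zpow s)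
    have hj1 : 1 ≤ j := by
      rcases Nat.eq_zero_or_pos j with rfl | h
      · exact absurd (orderOf_eq_one_iff.mp (by simpa using hj)) hb1
      · exact h
    have hk1 : 1 ≤ k := le_trans hj1 hjk
    -- z := b ^ s, a nontrivial element of ⟨a⟩ ∩ ⟨b⟩, of order p ^ i with i ≥ 1
    have hzpk : (b ^ s) ^ (p ^ k : ℕ) = 1 := by
      rw [← zpow_natCast (b ^ s), ← zpow_mul, mul_comm, zpow_mul, zpow_natCast, hbk, one_zpow]
    obtain ⟨i, hik, hi⟩ := (Nat.dvd_prime_pow hp).1 (orderOf_dvd_of_pow_eq_one hzpk)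
    have hi1 : 1 ≤ i := by
      rcases Nat.eq_zero_or_pos i with rfl | h
      · exact absurd (orderOf_eq_one_iff.mp (by simpa using hi)) hs1
      · exact h
    -- z' := (b ^ s) ^ (p ^ (i - 1)) has order exactly p, and lies in ⟨a⟩ ∩ ⟨b⟩
    have hz'ne : ((b ^ s) ^ (p ^ (i - 1) : ℕ)) ≠ 1 := by
      intro h
      have h2 := orderOf_dvd_of_pow_eq_one h
      rw [hi] at h2
      have := (Nat.pow_dvd_pow_iff_le_right hp.one_lt).1 h2
      omega
    have hz'p : ((b ^ s) ^ (p ^ (i - 1) : ℕ)) ^ p = 1 := by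
      rw [← pow_mul, ← pow_succ, Nat.sub_add_cancel hi1, ← hi, pow_orderOf_eq_one]
    have hz'b : (b ^ s) ^ (p ^ (i - 1) : ℕ) = b ^ (s * (p : ℤ) ^ (i - 1)) := by
      rw [← zpow_natCast (b ^ s), ← zpow_mul]
      push_cast
      ring_nf
    have hz'a : (b ^ s) ^ (p ^ (i - 1) : ℕ) = a ^ (u * (p : ℤ) ^ (i - 1)) := by
      rw [hu, ← zpow_natCast (a ^ u), ← zpow_mul]
      push_cast
      ring_nf
    -- write s' = s * p^(i-1); then p^(j-1) ∣ s' but p^j ∤ s'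
    set s' : ℤ := s * (p : ℤ) ^ (i - 1) with hs'def
    have hbs'ne : b ^ s' ≠ 1 := by rw [← hz'b]; exact hz'ne
    have hbs'p : b ^ (s' * (p : ℤ)) = 1 := by
      rw [zpow_mul, zpow_natCast, ← hz'b, hz'p]
    have hpj : ((p : ℤ)) ^ j ∣ s' * (p : ℤ) := by
      have h2 := orderOf_dvd_iff_zpow_eq_one.2 hbs'p
      rw [hj] at h2
      exact_mod_cast h2
    have hpj' : ((p : ℤ)) ^ (j - 1) ∣ s' := by
      have hp0 : ((p : ℤ)) ≠ 0 := by exact_mod_cast hp.pos.ne'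
      have h2 : ((p : ℤ)) ^ (j - 1) * (p : ℤ) ∣ s' * (p : ℤ) := by
        rwa [← pow_succ, Nat.sub_add_cancel hj1]
      exact (mul_dvd_mul_iff_right hp0).1 h2
    obtain ⟨u', hu'⟩ := hpj'
    have hndvd : ¬ ((p : ℤ) ∣ u') := by
      rintro ⟨w, hw⟩
      apply hbs'ne
      have h2 : ((p : ℤ)) ^ j ∣ s' := by
        refine ⟨w, ?_⟩
        have e : (p : ℤ) ^ (j - 1) * (p : ℤ) = (p : ℤ) ^ j := by
          rw [← pow_succ, Nat.sub_add_cancel hj1]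
        rw [hu', hw, ← e]
        ring
      have h3 : ((orderOf b : ℤ)) ∣ s' := by rw [hj]; exact_mod_cast h2
      exact orderOf_dvd_iff_zpow_eq_one.1 h3
    obtain ⟨v, w, hvw⟩ := ((Nat.prime_iff_prime_int.1 hp).coprime_iff_not_dvd.2 hndvd).symm
    -- hence b ^ (p^(j-1)) ∈ ⟨a⟩
    have hbpj1 : b ^ ((p : ℤ)) ^ j = 1 := by
      have e : ((p : ℤ)) ^ j = ((p ^ j : ℕ) : ℤ) := by push_cast; ring
      rw [e, zpow_natCast, ← hj, pow_orderOf_eq_one]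
    set m₀ : ℤ := u * (p : ℤ) ^ (i - 1) * v with hm₀def
    have hbpj : b ^ ((p : ℤ)) ^ (j - 1) = a ^ m₀ := by
      have h1 : b ^ ((p : ℤ) ^ (j - 1) * (v * u' + w * (p : ℤ))) = b ^ ((p : ℤ)) ^ (j - 1) := by
        rw [hvw, mul_one]
      rw [← h1, mul_add, zpow_add]
      have e1 : (p : ℤ) ^ (j - 1) * (v * u') = s' * v := by rw [hu']; ring
      have e2 : (p : ℤ) ^ (j - 1) * (w * (p : ℤ)) = (p : ℤ) ^ j * w := by
        have e : (p : ℤ) ^ (j - 1) * (p : ℤ) = (p : ℤ) ^ j := by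
          rw [← pow_succ, Nat.sub_add_cancel hj1]
        rw [← e]; ring
      rw [e1, e2, zpow_mul b s' v, zpow_mul b ((p : ℤ) ^ j) w, hbpj1, one_zpow, mul_one]
      rw [show b ^ s' = a ^ (u * (p : ℤ) ^ (i - 1)) from hz'b ▸ hz'a, ← zpow_mul, hm₀def]
    -- p^(j-1) divides m₀
    have ham : a ^ (m₀ * (p : ℤ)) = 1 := by
      rw [zpow_mul a m₀ (p : ℤ), ← hbpj, ← zpow_mul b ((p : ℤ) ^ (j - 1)) (p : ℤ), ← pow_succ, Nat.sub_add_cancel hj1, hbpj1]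
    have hpkm : ((p : ℤ)) ^ k ∣ m₀ * (p : ℤ) := by
      have h2 := orderOf_dvd_iff_zpow_eq_one.2 ham
      rw [ha] at h2
      exact_mod_cast h2
    have hpk'm : ((p : ℤ)) ^ (k - 1) ∣ m₀ := by
      have hp0 : ((p : ℤ)) ≠ 0 := by exact_mod_cast hp.pos.ne'
      have h2 : ((p : ℤ)) ^ (k - 1) * (p : ℤ) ∣ m₀ * (p : ℤ) := by
        rwa [← pow_succ, Nat.sub_add_cancel hk1]
      exact (mul_dvd_mul_iff_right hp0).1 h2
    have hpjm : ((p : ℤ)) ^ (j - 1) ∣ m₀ :=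
      dvd_trans (pow_dvd_pow _ (by omega)) hpk'm
    obtain ⟨f, hf⟩ := hpjm
    -- c := b * a ^ (-f) has strictly smaller order
    have hc1 : (b * a ^ (-f)) ^ (p ^ (j - 1) : ℕ) = 1 := by
      rw [mul_pow, ← zpow_natCast (a ^ (-f)), ← zpow_mul, ← zpow_natCast b]
      push_cast
      rw [hbpj, ← zpow_add, show m₀ + -f * (p : ℤ) ^ (j - 1) = 0 from by rw [hf]; ring,
        zpow_zero]
    have hcord : orderOf (b * a ^ (-f)) ≤ n := by
      have h2 : orderOf (b * a ^ (-f)) ≤ p ^ (j - 1) :=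
        Nat.le_of_dvd (pow_pos hp.pos _) (orderOf_dvd_of_pow_eq_one hc1)
      have h3 : p ^ (j - 1) < p ^ j := Nat.pow_lt_pow_right hp.one_lt (by omega)
      omega
    have hck : (b * a ^ (-f)) ^ (p ^ k : ℕ) = 1 := by
      rw [show (p ^ k : ℕ) = p ^ (j - 1) * p ^ (k - (j - 1)) from by
          rw [← pow_add, Nat.add_sub_cancel' (by omega : j - 1 ≤ k)],
        pow_mul, hc1, one_pow]
    obtain ⟨c', α', β', hce, hc'k, hc'd⟩ := IH (b * a ^ (-f)) hcord hck
    refine ⟨c', f + α', β', ?_, hc'k, hc'd⟩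
    have hbc : b = (b * a ^ (-f)) * a ^ f := by
      rw [mul_assoc, ← zpow_add, neg_add_cancel, zpow_zero, mul_one]
    calc b = (b * a ^ (-f)) * a ^ f := hbc
      _ = (a ^ α' * c' ^ β') * a ^ f := by rw [← hce]
      _ = a ^ (f + α') * c' ^ β' := by
          rw [zpow_add, mul_comm, ← mul_assoc]

/-- If `a` realizes the maximal order `p ^ k` and `φ a = a ^ s`, then `φ` raises every
element of `Ω_k` to the power `s`. -/
private lemma aux_univ {A : Type*} [CommGroup A] {p k : ℕ} (hp : p.Prime)
    (φ : A ≃* A) (hφ : ∀ a : A, ∃ n : ℤ, φ a = a ^ n)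
    {a : A} (ha : orderOf a = p ^ k) {s : ℤ} (hs : φ a = a ^ s) :
    ∀ b : A, b ^ p ^ k = 1 → φ b = b ^ s := by
  intro b hb
  obtain ⟨c, α, β, hbe, hck, hcd⟩ := aux_decomp hp ha (orderOf b) b le_rfl hb
  obtain ⟨n', hn'⟩ := hφ c
  obtain ⟨r, hr⟩ := hφ (a * c)
  have h1 : a ^ r * c ^ r = a ^ s * c ^ n' := by
    rw [← mul_zpow, ← hr, map_mul, hs, hn']
  have key : a ^ (r - s) = c ^ (n' - r) := by
    rw [zpow_sub_div, zpow_sub_div, div_eq_div_iff_mul_eq_mul, mul_comm (c ^ n') (a ^ s)]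
    exact h1
  have hcn : c ^ (n' - r) = 1 := hcd _ ⟨r - s, key.symm⟩
  have har : a ^ (r - s) = 1 := key.trans hcn
  have hdvd : ((p ^ k : ℕ) : ℤ) ∣ (r - s) := by
    rw [← ha]; exact orderOf_dvd_iff_zpow_eq_one.2 har
  have hcr : c ^ (r - s) = 1 := by
    obtain ⟨d, hd⟩ := hdvd
    rw [hd, zpow_mul, zpow_natCast, hck, one_zpow]
  have hcs : c ^ n' = c ^ s := by
    have h2 : c ^ (n' - r) * c ^ (r - s) = 1 := by rw [hcn, hcr, one_mul]
    rw [← zpow_add, sub_add_sub_cancel, zpow_sub_div] at h2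
    exact div_eq_one.1 h2
  calc φ b = φ (a ^ α * c ^ β) := by rw [← hbe]
    _ = (φ a) ^ α * (φ c) ^ β := by rw [map_mul, map_zpow, map_zpow]
    _ = (a ^ s) ^ α * (c ^ n') ^ β := by rw [hs, hn']
    _ = (a ^ s) ^ α * (c ^ s) ^ β := by rw [hcs]
    _ = (a ^ α) ^ s * (c ^ β) ^ s := by
        rw [← zpow_mul, ← zpow_mul, ← zpow_mul, ← zpow_mul, mul_comm s α, mul_comm s β]
    _ = (a ^ α * c ^ β) ^ s := (mul_zpow _ _ _).symm
    _ = b ^ s := by rw [← hbe]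

/-- Every power automorphism of an abelian `p`-group is universal: there is a compatible
sequence of exponents `t k` (coprime to `p`), i.e. a `p`-adic unit, such that `φ` raises
every element of order dividing `p ^ k` to the power `t k`. -/
theorem power_automorphism_of_abelian_pGroup_is_universal
    {A : Type*} [CommGroup A] (p : ℕ) (hp : p.Prime) (hA : IsPGroup p A)
    (φ : A ≃* A) (hφ : ∀ a : A, ∃ n : ℤ, φ a = a ^ n) :
    ∃ t : ℕ → ℤ,
      (∀ k : ℕ, IsCoprime (t k) (p : ℤ)) ∧
      (∀ k : ℕ, ∀ a : A, a ^ p ^ k = 1 → φ a = a ^ t k) ∧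
      (∀ k : ℕ, (p : ℤ) ^ k ∣ (t (k + 1) - t k)) := by
  classical
  -- canonical choice of an element of each realized order
  have F : ∀ j : ℕ, ∃ x : A, ((∃ y : A, orderOf y = p ^ j) → orderOf x = p ^ j) := by
    intro j
    by_cases h : ∃ y : A, orderOf y = p ^ j
    · exact ⟨h.choose, fun _ => h.choose_spec⟩
    · exact ⟨1, fun h' => absurd h' h⟩
  choose g hg using F
  choose τ hτ using fun j => hφ (g j)
  -- the largest realized order exponent below k
  obtain ⟨mex, hmex1, hmex2, hmex3⟩ :
      ∃ mex : ℕ → ℕ,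
        (∀ k, ∃ y : A, orderOf y = p ^ mex k) ∧
        (∀ k j, j ≤ k → (∃ y : A, orderOf y = p ^ j) → j ≤ mex k) ∧
        (∀ k, ((∃ y : A, orderOf y = p ^ (k + 1)) → mex (k + 1) = k + 1) ∧
          (¬ (∃ y : A, orderOf y = p ^ (k + 1)) → mex (k + 1) = mex k)) := by
    refine ⟨fun k => Nat.findGreatest (fun j => ∃ y : A, orderOf y = p ^ j) k,
      ?_, ?_, ?_⟩
    · intro k
      exact Nat.findGreatest_spec (P := fun j => ∃ y : A, orderOf y = p ^ j)
        (Nat.zero_le k) ⟨(1 : A), by simp⟩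
    · intro k j hjk hj
      exact Nat.le_findGreatest hjk hj
    · intro k
      constructor
      · intro h
        show Nat.findGreatest _ (k + 1) = k + 1
        rw [Nat.findGreatest_succ, if_pos h]
      · intro h
        show Nat.findGreatest _ (k + 1) = Nat.findGreatest _ k
        rw [Nat.findGreatest_succ, if_neg h]
  set t : ℕ → ℤ := fun k => if mex k = 0 then 1 else τ (mex k) with htdef
  -- the action property
  have hact : ∀ k : ℕ, ∀ b : A, b ^ p ^ k = 1 → φ b = b ^ t k := by
    intro k b hbk
    have hbm : b ^ p ^ mex k = 1 := by
      obtain ⟨i, hik, hi⟩ := (Nat.dvd_prime_pow hp).1 (orderOf_dvd_of_pow_eq_one hbk)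
      have hile : i ≤ mex k := hmex2 k i hik ⟨b, hi⟩
      calc b ^ p ^ mex k = (b ^ p ^ i) ^ p ^ (mex k - i) := by
            rw [← pow_mul, ← pow_add, Nat.add_sub_cancel' hile]
        _ = 1 := by rw [← hi, pow_orderOf_eq_one, one_pow]
    by_cases h0 : mex k = 0
    · have hb1 : b = 1 := by rwa [h0, pow_zero, pow_one] at hbm
      simp only [htdef, if_pos h0, hb1, map_one, one_zpow]
    · simp only [htdef, if_neg h0]
      exact aux_univ hp φ hφ (hg _ (hmex1 k)) (hτ (mex k)) b hbm
  refine ⟨t, ?_, hact, ?_⟩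
  · -- coprimality
    intro k
    by_cases h0 : mex k = 0
    · simp only [htdef, if_pos h0]
      exact isCoprime_one_left
    · have hord : orderOf (g (mex k)) = p ^ mex k := hg _ (hmex1 k)
      have hnd : ¬ ((p : ℤ) ∣ τ (mex k)) := by
        rintro ⟨s, hs⟩
        have hφord : orderOf (φ (g (mex k))) = p ^ mex k :=
          (orderOf_injective φ.toMonoidHom φ.injective _).trans hord
        have hone : (φ (g (mex k))) ^ (p ^ (mex k - 1) : ℕ) = 1 := by
          rw [hτ, hs, ← zpow_natCast, ← zpow_mul]
          have e : (p : ℤ) * s * ((p ^ (mex k - 1) : ℕ) : ℤ) = ((p ^ mex k : ℕ) : ℤ) * s := by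
            push_cast
            have e2 : (p : ℤ) ^ (mex k - 1) * (p : ℤ) = (p : ℤ) ^ mex k := by
              rw [← pow_succ, Nat.sub_add_cancel (Nat.one_le_iff_ne_zero.2 h0)]
            rw [← e2]; ring
          rw [e, zpow_mul, zpow_natCast, ← hord, pow_orderOf_eq_one, one_zpow]
        have h2 := orderOf_dvd_of_pow_eq_one hone
        rw [hφord] at h2
        have := (Nat.pow_dvd_pow_iff_le_right hp.one_lt).1 h2
        omega
      simp only [htdef, if_neg h0]
      exact ((Nat.prime_iff_prime_int.1 hp).coprime_iff_not_dvd.2 hnd).symm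
  · -- compatibility
    intro k
    by_cases hk1 : ∃ y : A, orderOf y = p ^ (k + 1)
    · have ha : orderOf (g (k + 1)) = p ^ (k + 1) := hg _ hk1
      have hap_pow : (g (k + 1) ^ p) ^ p ^ k = 1 := by
        rw [← pow_mul, ← pow_succ', ← ha, pow_orderOf_eq_one]
      have hap_pow' : (g (k + 1) ^ p) ^ p ^ (k + 1) = 1 := by
        rw [← pow_mul, mul_comm, pow_mul, ← ha, pow_orderOf_eq_one, one_pow]
      have hap_ord : orderOf (g (k + 1) ^ p) = p ^ k := by
        have h2 := orderOf_dvd_of_pow_eq_one hap_pow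
        have h3 : (g (k + 1)) ^ (p * orderOf (g (k + 1) ^ p)) = 1 := by
          rw [pow_mul, pow_orderOf_eq_one]
        have h4 := orderOf_dvd_of_pow_eq_one h3
        rw [ha, pow_succ'] at h4
        have h5 : p ^ k ∣ orderOf (g (k + 1) ^ p) :=
          (Nat.mul_dvd_mul_iff_left hp.pos).1 h4
        exact Nat.dvd_antisymm h2 h5
      have e1 : φ (g (k + 1) ^ p) = (g (k + 1) ^ p) ^ t (k + 1) :=
        hact (k + 1) _ hap_pow'
      have e2 : φ (g (k + 1) ^ p) = (g (k + 1) ^ p) ^ t k :=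
        hact k _ hap_pow
      have e3 : (g (k + 1) ^ p) ^ (t (k + 1) - t k) = 1 := by
        rw [zpow_sub_div, e1.symm.trans e2, div_self']
      have h6 := orderOf_dvd_iff_zpow_eq_one.2 e3
      rw [hap_ord] at h6
      exact_mod_cast h6
    · have hm2 : mex (k + 1) = mex k := (hmex3 k).2 hk1
      have : t (k + 1) = t k := by simp only [htdef, hm2]
      rw [this, sub_self]
      exact dvd_zero _
end

section
/- Let A be an abelian p-group and φ a power automorphism of A of finite order m > 1 with m dividing p − 1. Then for every k ∈ {1, …, m−1}, the fixed-point subgroup C_A(φ^k) is trivial. -/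
/-!
Write `ψ = φ ^ k`; it is again a power automorphism, and `ψ ^ m = 1` with `p ∤ m`. If `ψ`
fixed some `a ≠ 1`, it would fix an element `b` of order `p`. A power automorphism acts on
the elements of exponent `p` as a scalar, so `ψ` then fixes all of them. Finally, if `ψ`
fixes the elements of exponent `p`, then for `x ^ p ^ (n + 1) = 1` induction on `n` makes
`z = ψ x / x` an element of exponent `p`, so `ψ ^ j x = z ^ j * x`; hence `z ^ m = 1 = z ^ p`
and `z = 1`. Thus `ψ = 1`, forcing `m ∣ k`, which is impossible for `0 < k < m`.
-/

namespace MulAut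

variable {G : Type*}

def IsPower [Group G] (ψ : MulAut G) : Prop := ∀ a : G, ∃ n : ℤ, ψ a = a ^ n

theorem IsPower.pow [Group G] {ψ : MulAut G} (hψ : ψ.IsPower) : ∀ k : ℕ, (ψ ^ k).IsPower
  | 0 => fun a => ⟨1, by simp⟩
  | k + 1 => fun a => by
    obtain ⟨n, hn⟩ := hψ a
    obtain ⟨l, hl⟩ := hψ.pow k (a ^ n)
    exact ⟨n * l, by rw [pow_succ, mul_apply, hn, hl, zpow_mul]⟩

theorem pow_apply_eq_pow_mul [Monoid G] {ψ : MulAut G} {x z : G} (hz : ψ z = z)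
    (hx : ψ x = z * x) : ∀ j : ℕ, (ψ ^ j) x = z ^ j * x
  | 0 => by simp
  | j + 1 => by
    rw [pow_succ', mul_apply, pow_apply_eq_pow_mul hz hx j, map_mul, map_pow, hz, hx, pow_succ,
      mul_assoc]

theorem apply_eq_self_of_pow_prime_eq_one [CommGroup G] {p : ℕ} (hp : p.Prime) {ψ : MulAut G}
    (hψ : ψ.IsPower) {b : G} (hb : orderOf b = p) (hψb : ψ b = b) {x : G} (hx : x ^ p = 1) :
    ψ x = x := by
  have hxp : orderOf x ∣ p := orderOf_dvd_of_pow_eq_one hx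
  obtain ⟨s, hs⟩ := hψ x
  obtain ⟨u, hu⟩ := hψ (x * b)
  have key : x ^ (u - s) = b ^ (1 - u) := by
    have : x ^ u * b ^ u = x ^ s * b := by rw [← mul_zpow, ← hu, map_mul, hs, hψb]
    rw [zpow_sub, zpow_sub, zpow_one, ← div_eq_mul_inv, ← div_eq_mul_inv,
      div_eq_div_iff_mul_eq_mul, this, mul_comm]
  by_cases hus : (p : ℤ) ∣ u - s
  · have hu1 : (p : ℤ) ∣ 1 - u := by
      rw [← hb, orderOf_dvd_iff_zpow_eq_one, ← key, ← orderOf_dvd_iff_zpow_eq_one]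
      exact (Int.natCast_dvd_natCast.mpr hxp).trans hus
    have hs1 : (orderOf x : ℤ) ∣ s - 1 := by
      refine (Int.natCast_dvd_natCast.mpr hxp).trans ?_
      rw [show s - 1 = -((u - s) + (1 - u)) by ring]
      exact (dvd_add hus hu1).neg_right
    rw [hs, orderOf_dvd_sub_iff_zpow_eq_zpow.mp hs1, zpow_one]
  · have hcop : (u - s).gcd (orderOf x) = 1 :=
      Nat.Coprime.coprime_dvd_right hxp
        ((hp.coprime_iff_not_dvd.mpr (by rwa [← Int.ofNat_dvd_left])).symm)
    obtain ⟨n, hn⟩ := Subgroup.mem_zpowers_iff.mp (mem_zpowers_zpow_iff.mpr hcop)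
    rw [← hn, key, ← zpow_mul, map_zpow, hψb]

theorem apply_eq_self_of_pow_prime_pow_eq_one [CommGroup G] {p m : ℕ} (hpm : p.Coprime m)
    {ψ : MulAut G} (hψ : ψ ^ m = 1) (hfix : ∀ x : G, x ^ p = 1 → ψ x = x) :
    ∀ (n : ℕ) (x : G), x ^ p ^ n = 1 → ψ x = x
  | 0, x, hx => by rw [pow_zero, pow_one] at hx; rw [hx, map_one]
  | n + 1, x, hx => by
    have hψxp : ψ (x ^ p) = x ^ p :=
      apply_eq_self_of_pow_prime_pow_eq_one hpm hψ hfix n _ (by rwa [← pow_mul, ← pow_succ'])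
    set z := ψ x / x
    have hzp : z ^ p = 1 := by rw [div_pow, ← map_pow, hψxp, div_self']
    have hψx : ψ x = z * x := (div_mul_cancel _ _).symm
    have hzm : z ^ m = 1 := by
      have := pow_apply_eq_pow_mul (hfix z hzp) hψx m
      rwa [hψ, one_apply, right_eq_mul] at this
    rw [hψx, (pow_eq_one_iff_of_coprime hpm).mp ⟨hzp, hzm⟩, one_mul]

end MulAut

theorem IsPGroup.mulAut_eq_one_of_coprime {G : Type*} [CommGroup G] {p m : ℕ}
    (hG : IsPGroup p G) (hpm : p.Coprime m) {ψ : MulAut G} (hψ : ψ ^ m = 1)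
    (hfix : ∀ x : G, x ^ p = 1 → ψ x = x) : ψ = 1 :=
  MulEquiv.ext fun x =>
    let ⟨n, hn⟩ := hG x
    MulAut.apply_eq_self_of_pow_prime_pow_eq_one hpm hψ hfix n x hn

theorem fixed_points_of_power_automorphism_trivial_general
    {A : Type*} [CommGroup A] (p : ℕ) (hp : p.Prime) (hA : IsPGroup p A)
    (φ : MulAut A) (hφ : ∀ a : A, ∃ n : ℤ, φ a = a ^ n)
    (m : ℕ) (hm : orderOf φ = m) (hdvd : m ∣ p - 1) :
    ∀ k : ℕ, 1 ≤ k → k ≤ m - 1 → ∀ a : A, (φ ^ k) a = a → a = 1 := by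
  intro k hk1 hkm a hfix
  by_contra ha
  have : Fact p.Prime := ⟨hp⟩
  have hpm : p.Coprime m := Nat.Coprime.coprime_dvd_right hdvd
    ((Nat.coprime_self_sub_right hp.one_le).mpr p.coprime_one_right)
  have hb : orderOf (a ^ (orderOf a / p)) = p :=
    orderOf_pow_orderOf_div (hA.isOfFinOrder hp.ne_zero a).orderOf_pos.ne' (hA.dvd_orderOf ha)
  have hψm : (φ ^ k) ^ m = 1 := by rw [pow_right_comm, ← hm, pow_orderOf_eq_one, one_pow]
  have hψ : φ ^ k = 1 := hA.mulAut_eq_one_of_coprime hpm hψm fun x hx =>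
    MulAut.apply_eq_self_of_pow_prime_eq_one hp (MulAut.IsPower.pow hφ k) hb
      (by rw [map_pow, hfix]) hx
  have hmk : m ∣ k := hm ▸ orderOf_dvd_of_pow_eq_one hψ
  have := Nat.le_of_dvd (by omega) hmk
  omega

/-- If `φ` is a power automorphism of an abelian `p`-group of finite order `m > 1` with
`m ∣ p - 1`, then `φ ^ k` is fixed-point-free for `1 ≤ k ≤ m - 1`. -/
theorem fixed_points_of_power_automorphism_trivial
    {A : Type*} [CommGroup A] (p : ℕ) (hp : p.Prime) (hA : IsPGroup p A)
    (φ : MulAut A) (hφ : ∀ a : A, ∃ n : ℤ, φ a = a ^ n)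
    (m : ℕ) (hm : orderOf φ = m) (hm1 : 1 < m) (hdvd : m ∣ p - 1) :
    ∀ k : ℕ, 1 ≤ k → k ≤ m - 1 → ∀ a : A, (φ ^ k) a = a → a = 1 :=
  fixed_points_of_power_automorphism_trivial_general p hp hA φ hφ m hm hdvd
end

section
/- If G is a group in which |N_G(H) : H| is finite for every non-normal subgroup H, and N is a normal subgroup of G, then G/N has the same property: |N_{G/N}(K) : K| is finite for every non-normal subgroup K of G/N. -/
/-!
A surjection `f : G →* Q` pulls each subgroup `K ≤ Q` back to `f⁻¹(K)`, which is normal exactly when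
`K` is, whose normalizer is the preimage of the normalizer of `K`, and whose index in that
normalizer equals `|N_Q(K) : K|`. So a non-normal `K` with infinite index in its normalizer
would give one in `G`.
-/

namespace Subgroup

variable {G Q : Type*} [Group G] [Group Q] {f : G →* Q}

theorem relIndex_normalizer_comap_of_surjective (hf : Function.Surjective f) (K : Subgroup Q) :
    (K.comap f).relIndex (normalizer (K.comap f : Set G)) = K.relIndex (normalizer (K : Set Q)) := by
  rw [← comap_normalizer_eq_of_surjective _ hf, relIndex_comap,
    map_comap_eq_self_of_surjective hf]

end Subgroup

def IsFNIGroup (G : Type*) [Group G] : Prop :=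
  ∀ H : Subgroup G, ¬ H.Normal → H.relIndex (Subgroup.normalizer (H : Set G)) ≠ 0

theorem IsFNIGroup.of_surjective {G Q : Type*} [Group G] [Group Q] (hG : IsFNIGroup G)
    {f : G →* Q} (hf : Function.Surjective f) : IsFNIGroup Q := by
  intro K hK
  rw [← Subgroup.relIndex_normalizer_comap_of_surjective hf]
  exact hG _ (by rwa [Subgroup.normal_comap_iff_of_surjective hf])

/-- The FNI condition (every non-normal subgroup has finite index in its normalizer)
passes to quotients. -/
theorem FNI_quotient {G : Type*} [Group G]
    (h : ∀ H : Subgroup G, ¬ H.Normal → H.relIndex (Subgroup.normalizer (H : Set G)) ≠ 0)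
    (N : Subgroup G) [N.Normal] :
    ∀ K : Subgroup (G ⧸ N), ¬ K.Normal → K.relIndex (Subgroup.normalizer (K : Set (G ⧸ N))) ≠ 0 :=
  IsFNIGroup.of_surjective h (QuotientGroup.mk'_surjective N)
end

section
/- Let G be a group with a normal subgroup D such that G/D is cyclic and every subgroup of D is normal in G. If H is a non-normal subgroup of G, then H is not contained in D, and writing H = ⟨h, H∩D⟩ with h ∈ H \ D, an element x ∈ G normalizes H if and only if [x,h] ∈ H. -/
/-!
Since `H ⊓ D` is normal and `H = ⟨h⟩ ⊔ (H ⊓ D)`, conjugation by `x` preserves `H` as soon as it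
sends `h` into `H`; so `x` normalizes `H` iff `x h x⁻¹` and `x⁻¹ h x` lie in `H`. Both follow
from `[x,h] ∈ H`: as `G ⧸ D` is abelian, `[x,h] ∈ H ⊓ D`, and
`x⁻¹ h x = h [x,h]⁻¹`, `x h x⁻¹ = h (x [x,h] x⁻¹)`.
-/

open scoped commutatorElement

namespace Subgroup

variable {G : Type*} [Group G]

theorem commutatorElement_mem_of_isMulCommutative_quotient (N : Subgroup G) [N.Normal]
    [IsMulCommutative (G ⧸ N)] (a b : G) : ⁅a, b⁆ ∈ N :=
  Normal.quotient_commutative_iff_commutator_le.mp ‹_›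
    (commutator_mem_commutator (mem_top a) (mem_top b))

section ClosureSup

variable {H K : Subgroup G} [K.Normal] {h : G}

theorem conj_mem_of_eq_closure_sup (hH : H = closure {h} ⊔ K) {y : G} (hy : y * h * y⁻¹ ∈ H)
    {g : G} (hg : g ∈ H) : y * g * y⁻¹ ∈ H := by
  have hHK : K ≤ H := hH ▸ le_sup_right
  suffices H ≤ H.comap (MulAut.conj y).toMonoidHom from this hg
  conv_lhs => rw [hH]
  refine sup_le ((closure_le _).mpr ?_) fun k hk => hHK (Normal.conj_mem ‹_› k hk y)
  simpa using hy

theorem mem_normalizer_iff_of_eq_closure_sup (hH : H = closure {h} ⊔ K) {x : G} :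
    x ∈ normalizer (H : Set G) ↔ x * h * x⁻¹ ∈ H ∧ x⁻¹ * h * x ∈ H := by
  have hh : h ∈ H := hH ▸ mem_sup_left (mem_closure_singleton_self h)
  refine ⟨fun hx => ⟨(mem_normalizer_iff.mp hx h).mp hh, ?_⟩, fun ⟨hx, hx'⟩ => ?_⟩
  · simpa using (mem_normalizer_iff.mp (inv_mem hx) h).mp hh
  · refine mem_normalizer_iff.mpr fun g => ⟨conj_mem_of_eq_closure_sup hH hx, fun hg => ?_⟩
    simpa [mul_assoc] using conj_mem_of_eq_closure_sup hH (y := x⁻¹) (by simpa using hx') hg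

end ClosureSup

theorem mem_normalizer_iff_commutator_mem {D H : Subgroup G} [(H ⊓ D).Normal] {h x : G}
    (hH : H = closure {h} ⊔ (H ⊓ D)) (hD : x⁻¹ * h⁻¹ * x * h ∈ D) :
    x ∈ normalizer (H : Set G) ↔ x⁻¹ * h⁻¹ * x * h ∈ H := by
  have hh : h ∈ H := hH ▸ mem_sup_left (mem_closure_singleton_self h)
  rw [mem_normalizer_iff_of_eq_closure_sup hH]
  refine ⟨fun ⟨_, hx⟩ => by simpa [mul_assoc] using mul_mem (inv_mem hx) hh,
    fun hc => ⟨?_, ?_⟩⟩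
  · convert mul_mem hh (Normal.conj_mem ‹_› _ (mem_inf.mpr ⟨hc, hD⟩) x).1 using 1
    group
  · convert mul_mem hh (inv_mem hc) using 1
    group

end Subgroup

open Subgroup in
/-- Let `D ⊴ G` with `G/D` cyclic and every subgroup of `D` normal in `G`. If `H` is a
non-normal subgroup of `G`, then `H` is not contained in `D`, and whenever
`H = ⟨h⟩ ⊔ (H ⊓ D)` with `h ∈ H`, `h ∉ D`, an element `x` normalizes `H` iff
`[x,h] = x⁻¹h⁻¹xh ∈ H`. -/
theorem normalizer_membership_iff_commutator
    {G : Type*} [Group G] (D : Subgroup G) [D.Normal]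
    (hcyc : IsCyclic (G ⧸ D))
    (hall : ∀ K : Subgroup G, K ≤ D → K.Normal)
    (H : Subgroup G) (hH : ¬ H.Normal) :
    ¬ H ≤ D ∧
      ∀ h ∈ H, h ∉ D → H = Subgroup.closure {h} ⊔ (H ⊓ D) →
        ∀ x : G, x ∈ Subgroup.normalizer (H : Set G) ↔ x⁻¹ * h⁻¹ * x * h ∈ H := by
  refine ⟨fun hHD => hH (hall H hHD), fun h _ _ hgen x => ?_⟩
  have := hall (H ⊓ D) inf_le_right
  have := hcyc
  refine mem_normalizer_iff_commutator_mem hgen ?_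
  simpa [commutatorElement_def] using
    commutatorElement_mem_of_isMulCommutative_quotient D x⁻¹ h⁻¹
end

section
/- Let G be a group with a normal subgroup D such that every subgroup of D is normal in G, let H ≤ G with H = ⟨h, H∩D⟩ for some h ∈ H, and set N = H∩D (which is normal in G). Then the index |N_D(H) : H∩D| equals the order of the centralizer C_{D/N}(hN) in the quotient group G/N. -/
/-!
Modulo `N = H ⊓ D` the subgroup `H` becomes the cyclic group `⟨hN⟩`, which meets the
normal subgroup `D/N` trivially, and since `N ≤ H` an element of `D` normalizes `H`
exactly when its image normalizes `⟨hN⟩`. For `x ∈ D/N` normalizing `⟨hN⟩`, the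
commutator `[x, hN]` lies in both `⟨hN⟩` and `D/N`, so it is trivial: the image of
`N_D(H)` is the centralizer of `hN` in `D/N`, and `N` is the kernel of this projection.
-/

namespace Subgroup

variable {G G' : Type*} [Group G] [Group G']

theorem map_inf_of_ker_le_right {f : G →* G'} {H K : Subgroup G} (hK : f.ker ≤ K) :
    (H ⊓ K).map f = H.map f ⊓ K.map f := by
  refine le_antisymm (map_inf_le H K f) ?_
  rintro _ ⟨⟨a, ha, rfl⟩, b, hb, hab⟩
  have hba : b⁻¹ * a ∈ f.ker := by simp [hab]
  have haK : a ∈ K := by simpa using K.mul_mem hb (hK hba)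
  exact ⟨a, ⟨ha, haK⟩, rfl⟩

theorem map_normalizer_of_surjective_of_ker_le {f : G →* G'} (hf : Function.Surjective f)
    {H : Subgroup G} (hH : f.ker ≤ H) :
    (normalizer (H : Set G)).map f = normalizer (H.map f : Set G') := by
  rw [← map_comap_eq_self_of_surjective hf (normalizer (H.map f : Set G')),
    comap_normalizer_eq_of_surjective _ hf, comap_map_eq_self hH]

theorem map_closure_singleton_sup_of_le_ker {f : G →* G'} (g : G) {N : Subgroup G}
    (hN : N ≤ f.ker) : (closure {g} ⊔ N).map f = closure {f g} := by
  rw [map_sup, MonoidHom.map_closure, Set.image_singleton, (map_eq_bot_iff _).2 hN, sup_bot_eq]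

theorem normalizer_inf_eq_centralizer_inf_of_disjoint {E K : Subgroup G} [E.Normal]
    (hEK : Disjoint E K) :
    normalizer (K : Set G) ⊓ E = centralizer (K : Set G) ⊓ E := by
  refine le_antisymm ?_ (inf_le_inf_right E (centralizer_le_normalizer _))
  rintro x ⟨hxK, hxE⟩
  refine ⟨mem_centralizer_iff.2 fun k hk ↦ ?_, hxE⟩
  have hcK : x * k * x⁻¹ * k⁻¹ ∈ K :=
    K.mul_mem ((mem_normalizer_iff.1 hxK k).1 hk) (K.inv_mem hk)
  have hcE : x * k * x⁻¹ * k⁻¹ ∈ E := by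
    simpa only [mul_assoc] using E.mul_mem hxE (‹E.Normal›.conj_mem _ (E.inv_mem hxE) k)
  have hc : x * k * x⁻¹ * k⁻¹ = 1 := disjoint_def.1 hEK hcE hcK
  rw [mul_inv_eq_one, mul_inv_eq_iff_eq_mul] at hc
  exact hc.symm

end Subgroup

open Subgroup in
theorem normalizer_index_eq_centralizer_card_general
    {G : Type*} [Group G] (D : Subgroup G) [D.Normal]
    (H : Subgroup G) (h : G)
    (hgen : H = Subgroup.closure {h} ⊔ (H ⊓ D))
    [(H ⊓ D).Normal] :
    (H ⊓ D).relIndex (Subgroup.normalizer (H : Set G) ⊓ D) =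
      Nat.card ↥(Subgroup.centralizer {QuotientGroup.mk' (H ⊓ D) h} ⊓
        D.map (QuotientGroup.mk' (H ⊓ D))) := by
  set π := QuotientGroup.mk' (H ⊓ D)
  have hkerH : π.ker ≤ H := (QuotientGroup.ker_mk' _).trans_le inf_le_left
  have hkerD : π.ker ≤ D := (QuotientGroup.ker_mk' _).trans_le inf_le_right
  have hHπ : H.map π = closure {π h} :=
    (congrArg (map π) hgen).trans
      (map_closure_singleton_sup_of_le_ker h (QuotientGroup.ker_mk' _).ge)
  have hdisj : Disjoint (D.map π) (H.map π) := by
    rw [disjoint_comm, disjoint_iff, ← map_inf_of_ker_le_right hkerD, QuotientGroup.map_mk'_self]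
  calc (H ⊓ D).relIndex (normalizer (H : Set G) ⊓ D)
      = Nat.card ↥((normalizer (H : Set G) ⊓ D).map π) := by
        rw [← relIndex_ker, QuotientGroup.ker_mk']
    _ = Nat.card ↥(normalizer (H.map π : Set (G ⧸ H ⊓ D)) ⊓ D.map π) := by
        rw [map_inf_of_ker_le_right hkerD,
          map_normalizer_of_surjective_of_ker_le (QuotientGroup.mk'_surjective _) hkerH]
    _ = Nat.card ↥(centralizer {π h} ⊓ D.map π) := by
        rw [normalizer_inf_eq_centralizer_inf_of_disjoint hdisj, hHπ, centralizer_closure]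

/-- Let `D ⊴ G` with every subgroup of `D` normal in `G`, and `H = ⟨h⟩ ⊔ (H ⊓ D)`.
Then `|N_D(H) : H ⊓ D|` equals the order of the centralizer of the image of `h`
inside the image of `D` in `G/(H ⊓ D)`. -/
theorem normalizer_index_eq_centralizer_card
    {G : Type*} [Group G] (D : Subgroup G) [D.Normal]
    (hall : ∀ K : Subgroup G, K ≤ D → K.Normal)
    (H : Subgroup G) (h : G) (hh : h ∈ H)
    (hgen : H = Subgroup.closure {h} ⊔ (H ⊓ D))
    [(H ⊓ D).Normal] :
    (H ⊓ D).relIndex (Subgroup.normalizer (H : Set G) ⊓ D) =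
      Nat.card ↥(Subgroup.centralizer {QuotientGroup.mk' (H ⊓ D) h} ⊓
        D.map (QuotientGroup.mk' (H ⊓ D))) :=
  normalizer_index_eq_centralizer_card_general D H h hgen
end

section
/- Let G = ⟨g, A⟩ where A is an abelian normal subgroup of index 2, g² ∈ A, and g acts on A by inversion (a^g = a^{-1} for all a ∈ A). If H is a non-normal subgroup of G, then H is not contained in A, and for a ∈ A, a ∈ N_G(H) if and only if a² ∈ H ∩ A. Consequently N_A(H)/(H∩A) is an elementary abelian 2-group. -/
/-!
Conjugation by `g` is an automorphism acting on `A` as inversion, so `A` is abelian, and every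
`x = g y` outside `A` (with `y ∈ A`) inverts `A` as well. In particular every subgroup of `A` is
normal, so `H` contains some `h₀ ∉ A`. For `b ∈ A` and `x ∉ A` one has
`b x b⁻¹ = b (x b⁻¹ x⁻¹) x = b² x`. Hence `b` normalizes `H` exactly when `b² ∈ H`:
necessity from `x = h₀`, sufficiency because `b` centralizes `H ⊓ A`.
-/

namespace Subgroup

variable {G : Type*} [Group G] {A H : Subgroup G}

theorem mul_comm_of_forall_conj_eq_inv {g : G} (hinv : ∀ a ∈ A, g * a * g⁻¹ = a⁻¹) :
    ∀ a ∈ A, ∀ b ∈ A, a * b = b * a := by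
  intro a ha b hb
  calc a * b = (g * a⁻¹ * g⁻¹) * (g * b⁻¹ * g⁻¹) := by
        rw [hinv _ (inv_mem ha), hinv _ (inv_mem hb), inv_inv, inv_inv]
    _ = g * (b * a)⁻¹ * g⁻¹ := by group
    _ = b * a := by rw [hinv _ (inv_mem (mul_mem hb ha)), inv_inv]

theorem notMem_of_closure_singleton_sup_eq_top {g : G} (hA : A ≠ ⊤)
    (hgen : closure {g} ⊔ A = ⊤) : g ∉ A := by
  intro hg
  rw [sup_of_le_right ((closure_le A).mpr (Set.singleton_subset_iff.mpr hg))] at hgen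
  exact hA hgen

theorem conj_eq_inv_of_notMem_of_index_eq_two (hidx : A.index = 2) {g : G} (hg : g ∉ A)
    (hinv : ∀ a ∈ A, g * a * g⁻¹ = a⁻¹) {x : G} (hx : x ∉ A) {a : G} (ha : a ∈ A) :
    x * a * x⁻¹ = a⁻¹ := by
  have hgx : g⁻¹ * x ∈ A := by
    rw [mul_mem_iff_of_index_two hidx, inv_mem_iff]
    exact iff_of_false hg hx
  calc x * a * x⁻¹ = g * ((g⁻¹ * x) * a * (g⁻¹ * x)⁻¹) * g⁻¹ := by group
    _ = g * a * g⁻¹ := by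
        rw [mul_comm_of_forall_conj_eq_inv hinv _ hgx _ ha, mul_inv_cancel_right]
    _ = a⁻¹ := hinv a ha

theorem conj_eq_sq_mul {x b : G} (hx : ∀ a ∈ A, x * a * x⁻¹ = a⁻¹) (hb : b ∈ A) :
    b * x * b⁻¹ = b ^ 2 * x :=
  calc b * x * b⁻¹ = b * (x * b⁻¹ * x⁻¹) * x := by group
    _ = b ^ 2 * x := by rw [hx _ (inv_mem hb), inv_inv, sq]

section

variable (hab : ∀ a ∈ A, ∀ b ∈ A, a * b = b * a)
  (hout : ∀ x ∉ A, ∀ a ∈ A, x * a * x⁻¹ = a⁻¹)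
include hab hout

theorem normal_of_le_of_conj_eq_inv (hHA : H ≤ A) : H.Normal where
  conj_mem h hh x := by
    by_cases hx : x ∈ A
    · rwa [hab x hx h (hHA hh), mul_inv_cancel_right]
    · rw [hout x hx h (hHA hh)]
      exact inv_mem hh

theorem conj_mem_of_sq_mem {b : G} (hb : b ∈ A) (hb2 : b ^ 2 ∈ H) {x : G} (hxH : x ∈ H) :
    b * x * b⁻¹ ∈ H := by
  by_cases hx : x ∈ A
  · rwa [hab b hb x hx, mul_inv_cancel_right]
  · rw [conj_eq_sq_mul (hout x hx) hb]
    exact mul_mem hb2 hxH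

theorem mem_normalizer_iff_sq_mem (hHA : ¬ H ≤ A) {b : G} (hb : b ∈ A) :
    b ∈ normalizer (H : Set G) ↔ b ^ 2 ∈ H := by
  obtain ⟨h₀, h₀H, h₀A⟩ := SetLike.not_le_iff_exists.mp hHA
  refine ⟨fun hbN => ?_, fun hb2 => mem_normalizer_iff.mpr fun x => ⟨?_, fun hx => ?_⟩⟩
  · have hconj : b ^ 2 * h₀ ∈ H :=
      conj_eq_sq_mul (hout h₀ h₀A) hb ▸ (mem_normalizer_iff.mp hbN h₀).mp h₀H
    simpa using mul_mem hconj (inv_mem h₀H)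
  · exact conj_mem_of_sq_mem hab hout hb hb2
  · have hb2' : b⁻¹ ^ 2 ∈ H := by rw [inv_pow]; exact inv_mem hb2
    simpa [mul_assoc] using conj_mem_of_sq_mem hab hout (inv_mem hb) hb2' hx

end

end Subgroup

theorem normalizer_in_A_mod_H_elementary_abelian_general
    {G : Type*} [Group G] (A : Subgroup G)
    (hidx : A.index = 2)
    (g : G)
    (hinv : ∀ a ∈ A, g * a * g⁻¹ = a⁻¹)
    (hgen : Subgroup.closure {g} ⊔ A = ⊤)
    (H : Subgroup G) (hH : ¬ H.Normal) :
    ¬ H ≤ A ∧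
      (∀ a ∈ A, a ∈ Subgroup.normalizer (H : Set G) ↔ a ^ 2 ∈ H ⊓ A) ∧
      (∀ a ∈ Subgroup.normalizer (H : Set G) ⊓ A, a ^ 2 ∈ H ⊓ A) := by
  have hgA : g ∉ A :=
    Subgroup.notMem_of_closure_singleton_sup_eq_top (fun h => by simp [h] at hidx) hgen
  have hab := Subgroup.mul_comm_of_forall_conj_eq_inv hinv
  have hout : ∀ x ∉ A, ∀ a ∈ A, x * a * x⁻¹ = a⁻¹ := fun x hx a ha =>
    Subgroup.conj_eq_inv_of_notMem_of_index_eq_two hidx hgA hinv hx ha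
  have hHA : ¬ H ≤ A := fun hle => hH (Subgroup.normal_of_le_of_conj_eq_inv hab hout hle)
  have hN : ∀ a ∈ A, a ∈ Subgroup.normalizer (H : Set G) ↔ a ^ 2 ∈ H ⊓ A := fun a ha => by
    rw [Subgroup.mem_normalizer_iff_sq_mem hab hout hHA ha, Subgroup.mem_inf,
      and_iff_left (pow_mem ha 2)]
  exact ⟨hHA, hN, fun a ha => (hN a ha.2).mp ha.1⟩

/-- Let `G = ⟨g, A⟩` with `A` abelian, normal of index 2, `g² ∈ A` and `g` inverting `A`.
If `H` is non-normal in `G`, then `H ⊄ A`; for `a ∈ A`, `a` normalizes `H` iff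
`a² ∈ H ⊓ A`; hence `N_A(H)/(H ⊓ A)` is elementary abelian of exponent dividing 2. -/
theorem normalizer_in_A_mod_H_elementary_abelian
    {G : Type*} [Group G] (A : Subgroup G) [A.Normal]
    (hab : ∀ a ∈ A, ∀ b ∈ A, a * b = b * a)
    (hidx : A.index = 2)
    (g : G) (hg2 : g ^ 2 ∈ A)
    (hinv : ∀ a ∈ A, g * a * g⁻¹ = a⁻¹)
    (hgen : Subgroup.closure {g} ⊔ A = ⊤)
    (H : Subgroup G) (hH : ¬ H.Normal) :
    ¬ H ≤ A ∧
      (∀ a ∈ A, a ∈ Subgroup.normalizer (H : Set G) ↔ a ^ 2 ∈ H ⊓ A) ∧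
      (∀ a ∈ Subgroup.normalizer (H : Set G) ⊓ A, a ^ 2 ∈ H ⊓ A) :=
  normalizer_in_A_mod_H_elementary_abelian_general A hidx g hinv hgen H hH
end

section
/- Let D be a nilpotent periodic group, p an odd prime, φ a power automorphism of D whose restriction φ_p to the Sylow p-subgroup D_p has order m dividing p−1, and N a normal φ-invariant subgroup of D with D_p ⊄ N. Then the automorphism induced by φ_p on D_p N/N still has order m. -/
private lemma geom_dvd_lemma (p : ℕ) (hp : p.Prime) (c m : ℕ) (hpm : ¬ p ∣ m)
    (s : ℤ) (h1 : (p : ℤ) ∣ s - 1) (h2 : ((p ^ c : ℕ) : ℤ) ∣ s ^ m - 1) :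
    ((p ^ c : ℕ) : ℤ) ∣ s - 1 := by
  have hfac : (∑ i ∈ Finset.range m, s ^ i) * (s - 1) = s ^ m - 1 := geom_sum_mul s m
  have hs1 : (s : ZMod p) = 1 := by
    have := (ZMod.intCast_zmod_eq_zero_iff_dvd (s - 1) p).mpr h1
    push_cast at this
    linear_combination this
  have hnd : ¬ (p : ℤ) ∣ (∑ i ∈ Finset.range m, s ^ i) := by
    rw [← ZMod.intCast_zmod_eq_zero_iff_dvd]
    push_cast
    simp [hs1]
    exact fun h => hpm ((ZMod.natCast_eq_zero_iff m p).mp h)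
  have hpi : Prime (p : ℤ) := Nat.prime_iff_prime_int.mp hp
  have hcop : IsCoprime ((p : ℤ) ^ c) (∑ i ∈ Finset.range m, s ^ i) :=
    IsCoprime.pow_left ((hpi.coprime_iff_not_dvd).mpr hnd)
  have h2' : ((p : ℤ) ^ c) ∣ (∑ i ∈ Finset.range m, s ^ i) * (s - 1) := by
    rw [hfac]; exact_mod_cast h2
  have := hcop.dvd_of_dvd_mul_left h2'
  exact_mod_cast this


/-- Let `D` be a nilpotent periodic group, `p` an odd prime, `φ` a power automorphism of
`D` whose restriction to the Sylow `p`-subgroup `P` has order `m ∣ p - 1`, and `N` a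
normal `φ`-invariant subgroup of `D` with `P ⊄ N`. Then the automorphism induced by `φ`
on `PN/N` still has order `m`. -/
theorem induced_power_automorphism_same_order
    {D : Type*} [Group D] (hnil : Group.IsNilpotent D)
    (hper : ∀ d : D, IsOfFinOrder d)
    (p m : ℕ) (hp : p.Prime) (hodd : p ≠ 2)
    (φ : D ≃* D) (hpow : ∀ d : D, ∃ n : ℤ, φ d = d ^ n)
    (P : Subgroup D) (hP : ∀ d : D, d ∈ P ↔ ∃ k : ℕ, d ^ p ^ k = 1)
    (hm : m ∣ p - 1)
    (hord1 : ∀ d ∈ P, (φ ^ m : D ≃* D) d = d)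
    (hord2 : ∀ k : ℕ, 0 < k → k < m → ∃ d ∈ P, (φ ^ k : D ≃* D) d ≠ d)
    (N : Subgroup D) [N.Normal] (hNinv : ∀ d ∈ N, φ d ∈ N)
    (hPN : ¬ P ≤ N) :
    ∀ k : ℕ, 0 < k → k < m → ∃ d ∈ P, (φ ^ k : D ≃* D) d * d⁻¹ ∉ N := by
  intro k hk0 hkm
  by_contra h
  push_neg at h
  -- p does not divide m
  have hpm : ¬ p ∣ m := by
    intro hd
    have hm1 : 0 < p - 1 := by
      have := hp.two_le; omega
    have hmpos : 0 < m := lt_trans hk0 hkm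
    have := Nat.le_of_dvd hm1 (hd.trans hm)
    have := hp.two_le
    omega
  -- every non-fixed element of P lies in N
  have hA : ∀ y ∈ P, (φ ^ k : D ≃* D) y ≠ y → y ∈ N := by
    intro y hy hne
    obtain ⟨n, hn⟩ := hpow y
    have key : ∀ j : ℕ, (φ ^ j : D ≃* D) y = y ^ (n ^ j) := by
      intro j
      induction j with
      | zero => simp
      | succ j ih =>
        rw [pow_succ, MulAut.mul_apply, hn, map_zpow, ih, ← zpow_mul, ← pow_succ]
    -- order of y is a power of p
    obtain ⟨a, ha⟩ := (hP y).mp hy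
    obtain ⟨c, hc⟩ := (Nat.dvd_prime_pow hp).mp (orderOf_dvd_of_pow_eq_one ha)
    have hqm : ((orderOf y : ℕ) : ℤ) ∣ n ^ m - 1 := by
      rw [orderOf_dvd_iff_zpow_eq_one]
      have := hord1 y hy
      rw [key m] at this
      rw [zpow_sub, this, zpow_one, mul_inv_cancel]
    have hqk : ¬ ((orderOf y : ℕ) : ℤ) ∣ n ^ k - 1 := by
      intro hd
      apply hne
      rw [key k]
      have h1 : y ^ (n ^ k - 1) = 1 := orderOf_dvd_iff_zpow_eq_one.mp hd
      calc y ^ n ^ k = y ^ (n ^ k - 1 + 1) := by rw [sub_add_cancel]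
        _ = y ^ (n ^ k - 1) * y := zpow_add_one y _
        _ = y := by rw [h1, one_mul]
    have hpk : ¬ (p : ℤ) ∣ n ^ k - 1 := by
      intro hd
      apply hqk
      rw [hc.2]
      apply geom_dvd_lemma p hp c m hpm (n ^ k) hd
      have h2 : ((p ^ c : ℕ) : ℤ) ∣ n ^ m - 1 := by rw [← hc.2]; exact hqm
      have h3 : (n ^ m - 1) ∣ ((n ^ m) ^ k - 1 ^ k) := sub_dvd_pow_sub_pow _ _ _
      have h4 : ((n ^ m) ^ k - 1 ^ k : ℤ) = (n ^ k) ^ m - 1 := by ring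
      rw [h4] at h3
      exact h2.trans h3
    have hcop : IsCoprime (n ^ k - 1) ((orderOf y : ℕ) : ℤ) := by
      rw [hc.2]
      push_cast
      exact IsCoprime.pow_right
        (((Nat.prime_iff_prime_int.mp hp).coprime_iff_not_dvd.mpr hpk).symm)
    have hyN : y ^ (n ^ k - 1) ∈ N := by
      have e : y ^ (n ^ k - 1) = (φ ^ k : D ≃* D) y * y⁻¹ := by
        rw [key k, zpow_sub, zpow_one]
      rw [e]
      exact h y hy
    obtain ⟨u, v, huv⟩ := hcop
    have hy1 : y = (y ^ (n ^ k - 1)) ^ u * (y ^ ((orderOf y : ℕ) : ℤ)) ^ v := by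
      rw [← zpow_mul, ← zpow_mul, ← zpow_add,
        show (n ^ k - 1) * u + ((orderOf y : ℕ) : ℤ) * v
          = u * (n ^ k - 1) + v * ((orderOf y : ℕ) : ℤ) by ring, huv, zpow_one]
    rw [hy1]
    refine N.mul_mem (N.zpow_mem hyN u) ?_
    rw [zpow_natCast, pow_orderOf_eq_one, one_zpow]
    exact N.one_mem
  apply hPN
  obtain ⟨d, hd, hdne⟩ := hord2 k hk0 hkm
  have hdN : d ∈ N := hA d hd hdne
  intro y hy
  by_cases hfix : (φ ^ k : D ≃* D) y = y
  · have hdy : d * y ∈ P := P.mul_mem hd hy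
    have hne2 : (φ ^ k : D ≃* D) (d * y) ≠ d * y := by
      rw [map_mul, hfix]
      intro he
      exact hdne (mul_right_cancel he)
    have hdyN : d * y ∈ N := hA _ hdy hne2
    have : y = d⁻¹ * (d * y) := by group
    rw [this]
    exact N.mul_mem (N.inv_mem hdN) hdyN
  · exact hA y hy hfix
end
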